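/- arXiv:2207.02535 — 4 statements merged into one kernel-verified Lean document; each statement's English description precedes it below -/
import Mathlib

section
/- Let C be a linear code in F_q^n. Then for every integer e with 0 ≤ e ≤ h, dim(Hull_e(C)) = dim(Hull_{h−e}(C)). -/
open Finset

variable {F : Type*}

/-- The `e`-Galois dual of a linear code `C ⊆ F_q^n` (`q = p^h`):
`C^{⊥_e} = {x | ∀ c ∈ C, ∑ i, x i * (c i)^(p^e) = 0}`. -/
def galoisDual [Field F] (p e : ℕ) {n : ℕ} (C : Submodule F (Fin n → F)) :
    Submodule F (Fin n → F) where
  carrier := {x | ∀ c ∈ C, ∑ i, x i * c i ^ p ^ e = 0}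
  add_mem' := by
    intro a b ha hb c hc
    have h1 := ha c hc
    have h2 := hb c hc
    simp only [Pi.add_apply, add_mul, Finset.sum_add_distrib, h1, h2, add_zero]
  zero_mem' := by
    intro c hc
    simp
  smul_mem' := by
    intro r a ha c hc
    have h1 := ha c hc
    simp only [Pi.smul_apply, smul_eq_mul, mul_assoc, ← Finset.mul_sum, h1, mul_zero]

/-- The `e`-Galois hull of `C`: `Hull_e(C) = C ∩ C^{⊥_e}`. -/
def galoisHull [Field F] (p e : ℕ) {n : ℕ} (C : Submodule F (Fin n → F)) :
    Submodule F (Fin n → F) :=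
  C ⊓ galoisDual p e C

/-- `G` is a generator matrix of `C`: its rows form a basis of `C`. -/
def IsGenMatrix [Field F] {n k : ℕ} (C : Submodule F (Fin n → F))
    (G : Matrix (Fin k) (Fin n) F) : Prop :=
  LinearIndependent F (fun i : Fin k => G i) ∧
    Submodule.span F (Set.range fun i : Fin k => G i) = C

/-- `d` is the minimum (Hamming) distance of the linear code `C`. -/
def IsMinDist [Field F] [DecidableEq F] {n : ℕ} (C : Submodule F (Fin n → F)) (d : ℕ) : Prop :=
  (∃ c ∈ C, c ≠ 0 ∧ hammingNorm c = d) ∧ ∀ c ∈ C, c ≠ 0 → d ≤ hammingNorm c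

/-!
Write `σ = Frob^e` and let it act on `F^n` coordinatewise. For the Euclidean form,
`Hull_e(C) = C ∩ (σ C)^⊥`, and since `Frob^h = id` on `F_q`, `Frob^{h-e} = σ⁻¹`, so
`Hull_{h-e}(C) = C ∩ (σ⁻¹ C)^⊥`. The bijection `σ` preserves dimensions and maps the latter onto
`σ C ∩ C^⊥`. Finally, `dim (P ∩ Q^⊥) = dim (P^⊥ ∩ Q)` whenever `dim P = dim Q`; apply this to
`P = C`, `Q = σ C`.
-/

open Module LinearMap.BilinForm

section Orthogonal
variable {K V : Type*} [Field K] [AddCommGroup V] [Module K V]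

lemma LinearMap.BilinForm.orthogonal_sup (B : LinearMap.BilinForm K V) (N L : Submodule K V) :
    B.orthogonal (N ⊔ L) = B.orthogonal N ⊓ B.orthogonal L := by
  refine le_antisymm (le_inf (orthogonal_le le_sup_left) (orthogonal_le le_sup_right)) ?_
  rintro x ⟨hxN, hxL⟩ y hy
  obtain ⟨a, ha, b, hb, rfl⟩ := Submodule.mem_sup.mp hy
  simp only [map_add, LinearMap.add_apply, hxN a ha, hxL b hb, add_zero]

/-- `dim (P ⊓ Q⊥) - dim (P⊥ ⊓ Q) = dim P - dim Q`, because `(P ⊔ Q⊥)⊥ = P⊥ ⊓ Q`. -/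
lemma LinearMap.BilinForm.finrank_inf_orthogonal_comm [FiniteDimensional K V]
    {B : LinearMap.BilinForm K V} (hB : B.Nondegenerate) (hB₀ : B.IsRefl) {P Q : Submodule K V}
    (hPQ : finrank K P = finrank K Q) :
    finrank K ↥(P ⊓ B.orthogonal Q) = finrank K ↥(B.orthogonal P ⊓ Q) := by
  have hsup := Submodule.finrank_sup_add_finrank_inf_eq P (B.orthogonal Q)
  have hQ := finrank_orthogonal hB Q
  have hPQ' := finrank_orthogonal hB (P ⊔ B.orthogonal Q)
  rw [orthogonal_sup, orthogonal_orthogonal hB hB₀] at hPQ'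
  have := Submodule.finrank_le Q
  have := Submodule.finrank_le (P ⊔ B.orthogonal Q)
  omega

end Orthogonal

section DotProduct
variable (K ι : Type*) [Field K] [Fintype ι]

abbrev dotProductForm : LinearMap.BilinForm K (ι → K) := dotProductBilin K K

variable {K ι}

lemma dotProductForm_isRefl : (dotProductForm K ι).IsRefl :=
  fun x y h => by simpa [dotProduct_comm] using h

lemma dotProductForm_nondegenerate : (dotProductForm K ι).Nondegenerate :=
  ⟨fun x hx => dotProduct_eq_zero x (by simpa using hx),
    fun y hy => dotProduct_eq_zero y (by simpa [dotProduct_comm] using hy)⟩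

end DotProduct

section PiSemilinear
variable {K ι : Type*} [Field K]

def RingEquiv.piSemilinear (σ : K ≃+* K) (ι : Type*) : (ι → K) →ₛₗ[(σ : K →+* K)] (ι → K) where
  toFun x := σ ∘ x
  map_add' x y := funext fun i => map_add σ (x i) (y i)
  map_smul' c x := funext fun i => map_mul σ c (x i)

@[simp] lemma RingEquiv.piSemilinear_apply (σ : K ≃+* K) (x : ι → K) (i : ι) :
    σ.piSemilinear ι x i = σ (x i) := rfl

@[simp] lemma RingEquiv.piSemilinear_symm_apply (σ : K ≃+* K) (x : ι → K) :
    σ.piSemilinear ι (σ.symm.piSemilinear ι x) = x :=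
  funext fun i => σ.apply_symm_apply (x i)

lemma RingEquiv.piSemilinear_dotProduct [Fintype ι] (σ : K ≃+* K) (x y : ι → K) :
    σ.piSemilinear ι x ⬝ᵥ σ.piSemilinear ι y = σ (x ⬝ᵥ y) :=
  (RingHom.map_dotProduct (σ : K →+* K) x y).symm

lemma RingEquiv.piSemilinear_injective (σ : K ≃+* K) : Function.Injective (σ.piSemilinear ι) :=
  fun _ _ h => funext fun i => σ.injective (congrFun h i)

attribute [local instance] RingHomInvPair.of_ringEquiv RingHomInvPair.of_ringEquiv_symm

lemma finrank_map_piSemilinear (σ : K ≃+* K) (W : Submodule K (ι → K)) :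
    finrank K (W.map (σ.piSemilinear ι)) = finrank K W :=
  let e := W.equivMapOfInjective _ σ.piSemilinear_injective
  congrArg Cardinal.toNat
    (rank_eq_of_equiv_equiv σ e.toAddEquiv σ.bijective fun r x => map_smulₛₗ e r x).symm

lemma map_piSemilinear_map_symm (σ : K ≃+* K) (W : Submodule K (ι → K)) :
    (W.map (σ.symm.piSemilinear ι)).map (σ.piSemilinear ι) = W := by
  ext x
  simp

variable [Fintype ι]

lemma map_piSemilinear_orthogonal (σ : K ≃+* K) (W : Submodule K (ι → K)) :
    ((dotProductForm K ι).orthogonal W).map (σ.piSemilinear ι) =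
      (dotProductForm K ι).orthogonal (W.map (σ.piSemilinear ι)) := by
  ext y
  constructor
  · rintro ⟨z, hz, rfl⟩ _ ⟨w, hw, rfl⟩
    simpa [σ.piSemilinear_dotProduct] using hz w hw
  · intro hy
    refine ⟨σ.symm.piSemilinear ι y, fun w hw => σ.injective ?_, σ.piSemilinear_symm_apply y⟩
    simpa [← σ.piSemilinear_dotProduct] using hy _ (Submodule.mem_map_of_mem hw)

lemma finrank_inf_orthogonal_map_symm (σ : K ≃+* K) (C : Submodule K (ι → K)) :
    finrank K ↥(C ⊓ (dotProductForm K ι).orthogonal (C.map (σ.symm.piSemilinear ι))) =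
      finrank K ↥(C ⊓ (dotProductForm K ι).orthogonal (C.map (σ.piSemilinear ι))) := by
  calc _ = finrank K ↥((C ⊓ (dotProductForm K ι).orthogonal
          (C.map (σ.symm.piSemilinear ι))).map (σ.piSemilinear ι)) :=
        (finrank_map_piSemilinear σ _).symm
    _ = finrank K ↥((dotProductForm K ι).orthogonal C ⊓ C.map (σ.piSemilinear ι)) := by
        rw [Submodule.map_inf _ σ.piSemilinear_injective, map_piSemilinear_orthogonal,
          map_piSemilinear_map_symm, inf_comm]
    _ = _ := (finrank_inf_orthogonal_comm dotProductForm_nondegenerate dotProductForm_isRefl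
        (finrank_map_piSemilinear σ C).symm).symm

end PiSemilinear

lemma galoisDual_eq_orthogonal_map {K : Type*} [Field K] (p e : ℕ) [ExpChar K p] [PerfectRing K p]
    {n : ℕ} (C : Submodule K (Fin n → K)) :
    galoisDual p e C = (dotProductForm K (Fin n)).orthogonal
      (C.map ((iterateFrobeniusEquiv K p e).piSemilinear (Fin n))) := by
  ext x
  simp [mem_orthogonal_iff, dotProduct, galoisDual, iterateFrobenius_def, mul_comm]

lemma iterateFrobeniusEquiv_symm_of_card_eq {K : Type*} [Field K] [Fintype K] {p h e : ℕ}
    [ExpChar K p] (hcard : Fintype.card K = p ^ h) (he : e ≤ h) :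
    (iterateFrobeniusEquiv K p e).symm = iterateFrobeniusEquiv K p (h - e) :=
  RingEquiv.ext fun a => (RingEquiv.symm_apply_eq _).2 <| by
    rw [← iterateFrobeniusEquiv_add_apply, Nat.add_sub_cancel' he, iterateFrobeniusEquiv_def,
      ← hcard, FiniteField.pow_card]

theorem finrank_galoisHull_symm_general
    (p h : ℕ) (hp : p.Prime)
    [Field F] [Fintype F] (hcard : Fintype.card F = p ^ h)
    (n e : ℕ) (he : e ≤ h)
    (C : Submodule F (Fin n → F)) :
    Module.finrank F (galoisHull p e C) = Module.finrank F (galoisHull p (h - e) C) := by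
  have := Fact.mk hp
  have := charP_of_card_eq_prime_pow hcard
  rw [galoisHull, galoisHull, galoisDual_eq_orthogonal_map, galoisDual_eq_orthogonal_map,
    ← iterateFrobeniusEquiv_symm_of_card_eq hcard he]
  exact (finrank_inf_orthogonal_map_symm _ C).symm

/-- Theorem (symmetry of dimensions of Galois hulls):
`dim Hull_e(C) = dim Hull_{h-e}(C)` for every `0 ≤ e ≤ h`. -/
theorem finrank_galoisHull_symm
    (p h : ℕ) (hp : p.Prime) (hh : 0 < h)
    [Field F] [Fintype F] (hcard : Fintype.card F = p ^ h)
    (n e : ℕ) (he : e ≤ h)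
    (C : Submodule F (Fin n → F)) :
    Module.finrank F (galoisHull p e C) = Module.finrank F (galoisHull p (h - e) C) :=
  finrank_galoisHull_symm_general p h hp hcard n e he C
end

section
/- Let C be a linear code in F_q^n and let e be an integer with 0 ≤ e ≤ h. Then C is e-Galois self-orthogonal if and only if C is (h−e)-Galois self-orthogonal, i.e., C ⊆ C^{⊥_e} if and only if C ⊆ C^{⊥_{h−e}}. -/
open Finset

variable {F : Type*}

/-!
Over `F_q` with `q = p^h`, raising to the power `p^(h-e)` is a ring endomorphism and inverts
`a ↦ a^(p^e)`. Applied to `∑ i, c i * x i ^ p^e` it yields `∑ i, x i * c i ^ p^(h-e)`, so the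
`e`-form vanishes on `C × C` exactly when the `(h-e)`-form does.
-/

lemma pow_pow_pow_sub_of_card_eq {K : Type*} [GroupWithZero K] [Fintype K] {p h e : ℕ}
    (hcard : Fintype.card K = p ^ h) (he : e ≤ h) (a : K) :
    (a ^ p ^ e) ^ p ^ (h - e) = a := by
  rw [← pow_mul, ← pow_add, Nat.add_sub_cancel' he, ← hcard, FiniteField.pow_card]

section GaloisForm

variable [Field F] [Fintype F] {p h e : ℕ} [Fact p.Prime]

lemma sum_mul_pow_pow_sub_of_card_eq (hcard : Fintype.card F = p ^ h) (he : e ≤ h)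
    {n : ℕ} (x c : Fin n → F) :
    (∑ i, c i * x i ^ p ^ e) ^ p ^ (h - e) = ∑ i, x i * c i ^ p ^ (h - e) := by
  have : CharP F p := charP_of_card_eq_prime_pow hcard
  simp only [sum_pow_char_pow, mul_pow, pow_pow_pow_sub_of_card_eq hcard he, mul_comm]

lemma le_galoisDual_sub_of_le_galoisDual (hcard : Fintype.card F = p ^ h) (he : e ≤ h)
    {n : ℕ} {C : Submodule F (Fin n → F)} (hC : C ≤ galoisDual p e C) :
    C ≤ galoisDual p (h - e) C := by
  intro x hx c hc
  rw [← sum_mul_pow_pow_sub_of_card_eq hcard he, hC hc x hx,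
    zero_pow (pow_ne_zero _ (Fact.out : p.Prime).ne_zero)]

end GaloisForm

theorem galois_selfOrthogonal_iff_general
    (p h : ℕ) (hp : p.Prime)
    [Field F] [Fintype F] (hcard : Fintype.card F = p ^ h)
    (n e : ℕ) (he : e ≤ h)
    (C : Submodule F (Fin n → F)) :
    C ≤ galoisDual p e C ↔ C ≤ galoisDual p (h - e) C := by
  have : Fact p.Prime := ⟨hp⟩
  refine ⟨le_galoisDual_sub_of_le_galoisDual hcard he, fun hC => ?_⟩
  simpa only [Nat.sub_sub_self he] using
    le_galoisDual_sub_of_le_galoisDual hcard (Nat.sub_le h e) hC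

/-- Theorem: `C` is `e`-Galois self-orthogonal iff `C` is `(h-e)`-Galois self-orthogonal. -/
theorem galois_selfOrthogonal_iff
    (p h : ℕ) (hp : p.Prime) (hh : 0 < h)
    [Field F] [Fintype F] (hcard : Fintype.card F = p ^ h)
    (n e : ℕ) (he : e ≤ h)
    (C : Submodule F (Fin n → F)) :
    C ≤ galoisDual p e C ↔ C ≤ galoisDual p (h - e) C :=
  galois_selfOrthogonal_iff_general p h hp hcard n e he C
end

section
/- Let q = p^h and fix an integer e with 0 ≤ e ≤ h−1. Suppose one of the following conditions holds: (1) p is even; (2) p is odd, h/gcd(e,h) is odd, and (p^h−1)/2 is even; (3) p is odd, h/gcd(e,h) is even, and (p^{gcd(e,h)}+1) divides (p^h−1)/2. Then for every integer i ≥ 0 there exist α_1, α_2, …, α_{2i} ∈ F_q \ {0} such that α_1^{p^e+1} + α_2^{p^e+1} + ⋯ + α_{2i}^{p^e+1} = 0. -/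
/-! It suffices to find `x ≠ 0` with `x ^ (p ^ e + 1) = -1`: then `i` copies of `x` and `i` copies
of `1` form the family. In characteristic two `x = 1` works. Otherwise, whenever `2k ∣ q - 1` and
`p ^ e + 1 ≡ k [MOD 2k]`, a primitive `2k`-th root of unity `ζ` has `ζ ^ (p ^ e + 1) = ζ ^ k = -1`.
Condition (2) provides this with `k = 2` and condition (3) with `k = p ^ gcd(e, h) + 1`, because
`e / gcd(e, h)` is then odd and `a ^ m ≡ a [MOD 2 (a + 1)]` for odd `a` and odd `m`. -/

open Finset

variable {F : Type*}

theorem exists_fin_two_mul_sum_eq_zero {α M : Type*} [AddCommMonoid M] {P : α → Prop}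
    (f : α → M) {a b : α} (ha : P a) (hb : P b) (hab : f a + f b = 0) (i : ℕ) :
    ∃ v : Fin (2 * i) → α, (∀ j, P (v j)) ∧ ∑ j, f (v j) = 0 := by
  refine ⟨fun j => ![a, b] (finProdFinEquiv.symm j).1, fun j => ?_, ?_⟩
  · show P (![a, b] _)
    generalize (finProdFinEquiv.symm j).1 = c
    fin_cases c
    exacts [ha, hb]
  · rw [finProdFinEquiv.symm.sum_comp (fun c => f (![a, b] c.1)), Fintype.sum_prod_type_right]
    simp [Fin.sum_univ_two, hab]

namespace Nat

theorem two_mul_dvd_sub_one_of_dvd_div_two {n k : ℕ} (hn : Odd n) (hk : k ∣ (n - 1) / 2) :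
    2 * k ∣ n - 1 :=
  mul_dvd_of_dvd_div (Nat.Odd.sub_odd hn odd_one).two_dvd hk

theorem sq_modEq_one_of_odd {a : ℕ} (ha : Odd a) : a ^ 2 ≡ 1 [MOD 2 * (a + 1)] := by
  obtain ⟨c, rfl⟩ := ha
  refine ((modEq_iff_dvd' (one_le_pow _ _ (by omega))).mpr ⟨c, ?_⟩).symm
  exact Nat.sub_eq_of_eq_add (by ring)

theorem pow_modEq_self_of_odd {a m : ℕ} (ha : Odd a) (hm : Odd m) :
    a ^ m ≡ a [MOD 2 * (a + 1)] := by
  obtain ⟨j, rfl⟩ := hm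
  calc a ^ (2 * j + 1) = (a ^ 2) ^ j * a := by ring
    _ ≡ 1 ^ j * a [MOD 2 * (a + 1)] := ((sq_modEq_one_of_odd ha).pow j).mul_right a
    _ = a := by ring

theorem four_dvd_two_mul_add_one_of_odd {a : ℕ} (ha : Odd a) : 4 ∣ 2 * (a + 1) :=
  mul_dvd_mul_left 2 ha.add_one.two_dvd

theorem pow_modEq_one_four_of_odd_div_gcd {p h e : ℕ} (hp : Odd p) (hph : p ^ h ≡ 1 [MOD 4])
    (hodd : Odd (h / e.gcd h)) : p ^ e ≡ 1 [MOD 4] := by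
  have hp4 := four_dvd_two_mul_add_one_of_odd hp
  rcases even_or_odd e with ⟨j, rfl⟩ | he
  · calc p ^ (j + j) = (p ^ 2) ^ j := by ring
      _ ≡ 1 ^ j [MOD 4] := ((sq_modEq_one_of_odd hp).of_dvd hp4).pow j
      _ = 1 := one_pow j
  · have hh : Odd h := by
      rw [← Nat.mul_div_cancel' (gcd_dvd_right e h)]
      exact (he.of_dvd_nat (gcd_dvd_left e h)).mul hodd
    exact ((pow_modEq_self_of_odd hp he).of_dvd hp4).trans
      (((pow_modEq_self_of_odd hp hh).of_dvd hp4).symm.trans hph)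

theorem odd_div_gcd_of_even_div_gcd {e h : ℕ} (hh : 0 < h) (heven : Even (h / e.gcd h)) :
    Odd (e / e.gcd h) := by
  have hcop := coprime_div_gcd_div_gcd (gcd_pos_of_pos_right e hh)
  rw [← not_even_iff_odd]
  intro he
  have := Nat.dvd_gcd he.two_dvd heven.two_dvd
  rw [hcop] at this
  omega

end Nat

namespace FiniteField

variable [Field F] [Fintype F]

theorem exists_isPrimitiveRoot_of_dvd {n : ℕ} (hn : n ∣ Fintype.card F - 1) :
    ∃ ζ : F, IsPrimitiveRoot ζ n := by
  obtain ⟨g, hg⟩ := IsCyclic.exists_ofOrder_eq_natCard (α := Fˣ)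
  rw [Nat.card_units, Nat.card_eq_fintype_card] at hg
  rw [← hg] at hn
  have hg0 : orderOf g ≠ 0 := by
    have := Fintype.one_lt_card (α := F)
    omega
  have hζ := IsPrimitiveRoot.orderOf (g ^ (orderOf g / n))
  rw [orderOf_pow_orderOf_div hg0 hn] at hζ
  exact ⟨_, IsPrimitiveRoot.coe_units_iff.mpr hζ⟩

theorem exists_pow_eq_neg_one_of_modEq {k N : ℕ} (hk : 2 * k ∣ Fintype.card F - 1)
    (hN : N ≡ k [MOD 2 * k]) : ∃ x : F, x ≠ 0 ∧ x ^ N = -1 := by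
  obtain ⟨ζ, hζ⟩ := exists_isPrimitiveRoot_of_dvd hk
  have hk0 : k ≠ 0 := by
    rintro rfl
    have := Fintype.one_lt_card (α := F)
    simp at hk
    omega
  have hζk : ζ ^ k = -1 := by
    have := hζ.pow_of_dvd hk0 (dvd_mul_left k 2)
    rw [Nat.mul_div_cancel _ (Nat.pos_of_ne_zero hk0)] at this
    exact this.eq_neg_one_of_two_right
  refine ⟨ζ, hζ.ne_zero (by omega), ?_⟩
  rw [← pow_mod_orderOf, ← hζ.eq_orderOf, hN, Nat.mod_eq_of_lt (by omega), hζk]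

end FiniteField

theorem exists_even_family_sum_pow_eq_zero_general
    (p h : ℕ) (hh : 0 < h)
    [Field F] [Fintype F] (hcard : Fintype.card F = p ^ h)
    (e : ℕ)
    (hcond : Even p ∨
      (Odd p ∧ Odd (h / Nat.gcd e h) ∧ Even ((p ^ h - 1) / 2)) ∨
      (Odd p ∧ Even (h / Nat.gcd e h) ∧ (p ^ Nat.gcd e h + 1) ∣ ((p ^ h - 1) / 2))) :
    ∀ i : ℕ, ∃ α : Fin (2 * i) → F,
      (∀ j, α j ≠ 0) ∧ ∑ j, α j ^ (p ^ e + 1) = 0 := by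
  suffices ∃ x : F, x ≠ 0 ∧ x ^ (p ^ e + 1) = -1 by
    obtain ⟨x, hx0, hx⟩ := this
    exact exists_fin_two_mul_sum_eq_zero (P := (· ≠ 0)) (· ^ (p ^ e + 1)) hx0 one_ne_zero
      (by rw [hx, one_pow, neg_add_cancel])
  rcases hcond with hp | ⟨hp, hodd, heven⟩ | ⟨hp, heven, hdvd⟩
  · refine ⟨1, one_ne_zero, ?_⟩
    rw [one_pow, eq_comm, neg_one_eq_one_iff, FiniteField.even_card_iff_char_two, hcard,
      ← Nat.even_iff]
    exact hp.pow_of_ne_zero hh.ne'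
  · have h4 := Nat.two_mul_dvd_sub_one_of_dvd_div_two hp.pow heven.two_dvd
    have hph : p ^ h ≡ 1 [MOD 4] := ((Nat.modEq_iff_dvd' hp.pow.pos).mpr h4).symm
    exact FiniteField.exists_pow_eq_neg_one_of_modEq (hcard ▸ h4)
      ((Nat.pow_modEq_one_four_of_odd_div_gcd hp hph hodd).add_right 1)
  · have hpe : p ^ e = (p ^ e.gcd h) ^ (e / e.gcd h) := by
      rw [← pow_mul, Nat.mul_div_cancel' (Nat.gcd_dvd_left e h)]
    refine FiniteField.exists_pow_eq_neg_one_of_modEq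
      (hcard ▸ Nat.two_mul_dvd_sub_one_of_dvd_div_two hp.pow hdvd) ?_
    rw [hpe]
    exact (Nat.pow_modEq_self_of_odd hp.pow (Nat.odd_div_gcd_of_even_div_gcd hh heven)).add_right 1

/-- Theorem: under one of the conditions (1) `p` even; (2) `p` odd, `h/gcd(e,h)` odd and
`(p^h-1)/2` even; (3) `p` odd, `h/gcd(e,h)` even and `(p^{gcd(e,h)}+1) ∣ (p^h-1)/2`,
for every `i ≥ 0` there exist `α₁,…,α_{2i} ∈ F_q^*` with `∑ α_j^{p^e+1} = 0`. -/
theorem exists_even_family_sum_pow_eq_zero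
    (p h : ℕ) (hp : p.Prime) (hh : 0 < h)
    [Field F] [Fintype F] (hcard : Fintype.card F = p ^ h)
    (e : ℕ) (he : e ≤ h - 1)
    (hcond : Even p ∨
      (Odd p ∧ Odd (h / Nat.gcd e h) ∧ Even ((p ^ h - 1) / 2)) ∨
      (Odd p ∧ Even (h / Nat.gcd e h) ∧ (p ^ Nat.gcd e h + 1) ∣ ((p ^ h - 1) / 2))) :
    ∀ i : ℕ, ∃ α : Fin (2 * i) → F,
      (∀ j, α j ≠ 0) ∧ ∑ j, α j ^ (p ^ e + 1) = 0 :=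
  exists_even_family_sum_pow_eq_zero_general p h hh hcard e hcond
end

section
/- Let C be an e-Galois self-orthogonal linear code in F_q^n of dimension k and minimum distance d, where 0 ≤ e ≤ h−1. Then there exists a linear code C_1 in F_q^{n+1} of dimension k with dim(Hull_e(C_1)) = k−1 whose minimum distance d̃_1 satisfies d ≤ d̃_1 ≤ n + 2 − k. -/
/-!
Lengthen `C` by one coordinate carrying a nonzero linear functional `φ` on `C`, `c ↦ (c, φ c)`.
Since `C` is `e`-Galois self-orthogonal, the form of two lengthened codewords reduces to the new
coordinate, `φ c * (φ c') ^ p ^ e`, so the hull of the lengthened code is the image of `ker φ` and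
has dimension `k - 1`. Lengthening does not lower weights, whence `d ≤ d₁`, and `d₁ ≤ n + 2 - k`
is the Singleton bound for the new `[n + 1, k]` code.
-/

open Finset

variable {F : Type*}

open Module

theorem hammingNorm_le_hammingNorm_snoc {β : Type*} [Zero β] [DecidableEq β] {n : ℕ}
    (v : Fin n → β) (a : β) : hammingNorm v ≤ hammingNorm (Fin.snoc v a : Fin (n + 1) → β) :=
  Finset.card_le_card_of_injOn Fin.castSucc (fun i hi => by simpa using hi)
    (Fin.castSucc_injective _).injOn

/-- The Singleton bound, witnessed by a nonzero codeword vanishing on `k - 1` coordinates. -/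
theorem Submodule.exists_mem_ne_zero_hammingNorm_add_finrank_le {ι : Type*} [Fintype ι]
    [Field F] [DecidableEq F] (C : Submodule F (ι → F)) (hC : 0 < finrank F C) :
    ∃ x ∈ C, x ≠ 0 ∧ hammingNorm x + finrank F C ≤ Fintype.card ι + 1 := by
  classical
  have hCle : finrank F C ≤ Fintype.card ι := by
    simpa using C.finrank_le
  obtain ⟨s, -, hs⟩ := Finset.exists_subset_card_eq (s := (Finset.univ : Finset ι))
    (n := finrank F C - 1) (by simp; omega)
  let restrict : C →ₗ[F] (s → F) := LinearMap.funLeft F F Subtype.val ∘ₗ C.subtype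
  have hker : LinearMap.ker restrict ≠ ⊥ :=
    LinearMap.ker_ne_bot_of_finrank_lt (by simp [hs]; omega)
  obtain ⟨⟨x, hxC⟩, hx, hx0⟩ := (Submodule.ne_bot_iff _).1 hker
  refine ⟨x, hxC, by simpa using hx0, ?_⟩
  have hsupp : hammingNorm x ≤ sᶜ.card := Finset.card_le_card fun i hi => by
    simp only [Finset.mem_filter, Finset.mem_univ, true_and] at hi
    exact Finset.mem_compl.2 fun his => hi (congrFun hx ⟨i, his⟩)
  rw [Finset.card_compl, hs] at hsupp
  omega

theorem exists_isMinDist [Field F] [DecidableEq F] {n : ℕ} (C : Submodule F (Fin n → F))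
    (hC : C ≠ ⊥) : ∃ d, IsMinDist C d := by
  classical
  have hex : ∃ r, ∃ c ∈ C, c ≠ 0 ∧ hammingNorm c = r := by
    obtain ⟨c, hc, hc0⟩ := (Submodule.ne_bot_iff C).1 hC
    exact ⟨_, c, hc, hc0, rfl⟩
  exact ⟨Nat.find hex, Nat.find_spec hex, fun c hc hc0 => Nat.find_min' hex ⟨c, hc, hc0, rfl⟩⟩

theorem Fin.sum_snoc_mul_snoc_pow {R : Type*} [CommSemiring R] {n : ℕ} (x y : Fin n → R)
    (a b : R) (m : ℕ) :
    ∑ i, (Fin.snoc x a : Fin (n + 1) → R) i * (Fin.snoc y b : Fin (n + 1) → R) i ^ m =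
      ∑ i, x i * y i ^ m + a * b ^ m := by
  simp [Fin.sum_univ_castSucc]

section SnocExtension

variable [Field F] {n : ℕ} (C : Submodule F (Fin n → F)) (φ : C →ₗ[F] F)

def snocExtension : C →ₗ[F] (Fin (n + 1) → F) where
  toFun c := Fin.snoc (c : Fin n → F) (φ c)
  map_add' c c' := by
    ext i
    refine Fin.lastCases ?_ (fun j => ?_) i <;> simp
  map_smul' r c := by
    ext i
    refine Fin.lastCases ?_ (fun j => ?_) i <;> simp

theorem snocExtension_apply (c : C) : snocExtension C φ c = Fin.snoc (c : Fin n → F) (φ c) :=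
  rfl

theorem snocExtension_injective : Function.Injective (snocExtension C φ) := fun c c' h =>
  Subtype.ext <| funext fun i => by simpa [snocExtension_apply] using congrFun h i.castSucc

variable {C φ} (p e : ℕ)

theorem galoisHull_range_snocExtension (hso : C ≤ galoisDual p e C) (hφ : φ ≠ 0) :
    galoisHull p e (LinearMap.range (snocExtension C φ)) =
      (LinearMap.ker φ).map (snocExtension C φ) := by
  have hform (c c' : C) : ∑ i, snocExtension C φ c i * snocExtension C φ c' i ^ p ^ e =
      φ c * φ c' ^ p ^ e := by
    rw [snocExtension_apply, snocExtension_apply, Fin.sum_snoc_mul_snoc_pow,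
      hso c.2 _ c'.2, zero_add]
  apply le_antisymm
  · rintro _ ⟨⟨c, rfl⟩, hdual⟩
    obtain ⟨c₀, hc₀⟩ := DFunLike.ne_iff.1 hφ
    have h := hdual _ ⟨c₀, rfl⟩
    rw [hform] at h
    exact ⟨c, (mul_eq_zero.1 h).resolve_right (pow_ne_zero _ hc₀), rfl⟩
  · rintro _ ⟨c, hc, rfl⟩
    refine ⟨⟨c, rfl⟩, ?_⟩
    rintro _ ⟨c', rfl⟩
    rw [hform, LinearMap.mem_ker.1 hc, zero_mul]

theorem finrank_galoisHull_range_snocExtension_add_one (hso : C ≤ galoisDual p e C)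
    (hφ : φ ≠ 0) :
    finrank F (galoisHull p e (LinearMap.range (snocExtension C φ))) + 1 = finrank F C := by
  rw [galoisHull_range_snocExtension p e hso hφ,
    ← (Submodule.equivMapOfInjective _ (snocExtension_injective C φ) _).finrank_eq,
    Dual.finrank_ker_add_one_of_ne_zero hφ]

end SnocExtension

theorem exists_code_length_succ_hull_dim_pred_general
    (p : ℕ) [Field F] [DecidableEq F] (n k d e : ℕ)
    (C : Submodule F (Fin n → F)) (hso : C ≤ galoisDual p e C)
    (hk : Module.finrank F C = k) (hd : IsMinDist C d) :
    ∃ C₁ : Submodule F (Fin (n + 1) → F),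
      Module.finrank F C₁ = k ∧
        Module.finrank F (galoisHull p e C₁) = k - 1 ∧
          ∃ d' : ℕ, IsMinDist C₁ d' ∧ d ≤ d' ∧ d' ≤ n + 2 - k := by
  obtain ⟨⟨c₀, hc₀C, hc₀, -⟩, hd_le⟩ := hd
  obtain ⟨φ, hφc₀⟩ :=
    Projective.exists_dual_ne_zero F (x := (⟨c₀, hc₀C⟩ : C)) (by simpa using hc₀)
  have hφ : φ ≠ 0 := fun h => hφc₀ (by simp [h])
  have hhull := finrank_galoisHull_range_snocExtension_add_one p e hso hφ
  set C₁ := LinearMap.range (snocExtension C φ)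
  have hC₁ : finrank F C₁ = k :=
    (LinearMap.finrank_range_of_inj (snocExtension_injective C φ)).trans hk
  obtain ⟨x, hxC₁, hx0, hx⟩ := C₁.exists_mem_ne_zero_hammingNorm_add_finrank_le (by omega)
  obtain ⟨d', hd'⟩ := exists_isMinDist C₁ ((Submodule.ne_bot_iff _).2 ⟨x, hxC₁, hx0⟩)
  refine ⟨C₁, hC₁, by omega, d', hd', ?_, ?_⟩
  · obtain ⟨_, ⟨c, rfl⟩, hc0, rfl⟩ := hd'.1
    have hc : (c : Fin n → F) ≠ 0 := fun h => hc0 (by rw [show c = 0 from Subtype.ext h, map_zero])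
    exact (hd_le c c.2 hc).trans (hammingNorm_le_hammingNorm_snoc _ _)
  · have := hd'.2 x hxC₁ hx0
    simp only [Fintype.card_fin] at hx
    omega

/-- Theorem: from an `[n,k,d]_q` `e`-Galois self-orthogonal code there exists an
`[n+1, k, d̃₁]_q` code with `(k-1)`-dimensional `e`-Galois hull, where `d ≤ d̃₁ ≤ n+2-k`. -/
theorem exists_code_length_succ_hull_dim_pred
    (p h : ℕ) (hp : p.Prime) (hh : 0 < h)
    [Field F] [Fintype F] [DecidableEq F] (hcard : Fintype.card F = p ^ h)
    (n k d e : ℕ) (he : e ≤ h - 1)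
    (C : Submodule F (Fin n → F)) (hso : C ≤ galoisDual p e C)
    (hk : Module.finrank F C = k) (hd : IsMinDist C d) :
    ∃ C₁ : Submodule F (Fin (n + 1) → F),
      Module.finrank F C₁ = k ∧
        Module.finrank F (galoisHull p e C₁) = k - 1 ∧
          ∃ d' : ℕ, IsMinDist C₁ d' ∧ d ≤ d' ∧ d' ≤ n + 2 - k :=
  exists_code_length_succ_hull_dim_pred_general p n k d e C hso hk hd
end
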